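/- arXiv:1801.02566 — 2 statements merged into one kernel-verified Lean document; each statement's English description precedes it below -/
import Mathlib

section
/- If Z is a computable real, then a real X is Martin-Löf random with respect to μ_Z if and only if X = Z ⊕ Y for some Y that is Martin-Löf random with respect to the uniform measure λ. -/
/-! The map `Y ↦ Z ⊕ Y` pushes the uniform measure forward to `μ_Z`: both measures satisfy the
cylinder recursion that defines `μ_Z`, and that recursion pins a measure down on cylinders.
Martin-Löf tests can therefore be moved along the interleaving map. A `μ_Z`-test `U` pulls back to
the uniform test of those `τ` for which the first `2|τ|` or `2|τ| + 1` bits of `Z ⊕ τ` lie in `U`;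
this is effective because `Z` is computable. A uniform test `V` pushes forward to the `μ_Z`-test of
the strings whose odd part lies in `V`. Finally, the strings whose last bit sits at an even position
and differs from `Z` generate an effectively open `μ_Z`-null set, so a `μ_Z`-random `X` agrees with
`Z` at every even position, i.e. `X = Z ⊕ Y` where `Y` is the odd part of `X`. -/

open MeasureTheory Filter

abbrev Cantor : Type := ℕ → Bool
abbrev Str : Type := List Bool

def restr (X : Cantor) (n : ℕ) : Str := (List.range n).map X

def cyl (σ : Str) : Set Cantor := {X | restr X σ.length = σ}

def openOf (V : Set Str) : Set Cantor := ⋃ σ ∈ V, cyl σ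

def CE {α : Type} [Primcodable α] (S : Set α) : Prop :=
  ∃ f : α →. Unit, Partrec f ∧ ∀ a, a ∈ S ↔ (f a).Dom

def MLTest (μ : Measure Cantor) (U : ℕ → Set Str) : Prop :=
  CE {p : ℕ × Str | p.2 ∈ U p.1} ∧ ∀ i, μ (openOf (U i)) ≤ 1 / 2 ^ i

def MLRandom (μ : Measure Cantor) (X : Cantor) : Prop :=
  ∀ U, MLTest μ U → ∃ i, X ∉ openOf (U i)

noncomputable def cm (μ : Measure Cantor) (σ : Str) : ℝ := (μ (cyl σ)).toReal

def ComputableMeasure (μ : Measure Cantor) : Prop :=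
  IsProbabilityMeasure μ ∧
    ∃ g : Str × ℕ → ℚ, Computable g ∧
      ∀ σ n, |(g (σ, n) : ℝ) - cm μ σ| ≤ (2 : ℝ)⁻¹ ^ n

def interleave (Z Y : Cantor) : Cantor := fun n => if n % 2 = 0 then Z (n / 2) else Y (n / 2)

/-- The defining cylinder equations of the measure `μ_Z`: at odd levels the mass is split
evenly, at even levels all the mass goes to the bit `Z(|σ|/2)`. -/
def MuZSpec (Z : Cantor) (μ : Measure Cantor) : Prop :=
  IsProbabilityMeasure μ ∧
    (∀ σ : Str, Odd σ.length → ∀ b : Bool, μ (cyl (σ ++ [b])) = μ (cyl σ) / 2) ∧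
    (∀ σ : Str, Even σ.length →
      μ (cyl (σ ++ [Z (σ.length / 2)])) = μ (cyl σ) ∧
      μ (cyl (σ ++ [!Z (σ.length / 2)])) = 0)

/-- The uniform (Lebesgue) measure on Cantor space, characterized by its cylinder values. -/
def UniformSpec (lam : Measure Cantor) : Prop :=
  IsProbabilityMeasure lam ∧ ∀ σ : Str, lam (cyl σ) = (2 : ENNReal)⁻¹ ^ σ.length

def ofStr (σ : Str) : Cantor := fun i => σ.getD i false

@[simp] lemma length_restr (X : Cantor) (n : ℕ) : (restr X n).length = n := by
  simp [restr]

lemma restr_succ (X : Cantor) (n : ℕ) : restr X (n + 1) = restr X n ++ [X n] := by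
  simp [restr, List.range_succ]

lemma restr_eq_restr_iff {X X' : Cantor} {n : ℕ} :
    restr X n = restr X' n ↔ ∀ i < n, X i = X' i := by
  simp [restr, List.map_inj_left]

lemma ofStr_restr (X : Cantor) {n i : ℕ} (h : i < n) : ofStr (restr X n) i = X i := by
  simp [ofStr, restr, List.getD_eq_getElem?_getD, h]

lemma restr_ofStr (σ : Str) : restr (ofStr σ) σ.length = σ := by
  refine List.ext_getElem (length_restr _ _) fun i hi _ => ?_
  simp [restr, ofStr, List.getD_eq_getElem?_getD, List.getElem?_eq_getElem (by simpa using hi)]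

lemma mem_cyl_restr_iff {X X' : Cantor} {n : ℕ} :
    X ∈ cyl (restr X' n) ↔ restr X n = restr X' n := by
  simp [cyl]

lemma mem_cyl_restr (X : Cantor) (n : ℕ) : X ∈ cyl (restr X n) :=
  mem_cyl_restr_iff.2 rfl

lemma mem_cyl_iff {X : Cantor} {σ : Str} :
    X ∈ cyl σ ↔ ∀ i < σ.length, X i = ofStr σ i := by
  conv_lhs => rw [← restr_ofStr σ]
  rw [mem_cyl_restr_iff, restr_eq_restr_iff]

lemma cyl_append_singleton (σ : Str) (b : Bool) :
    cyl (σ ++ [b]) = cyl σ ∩ {X | X σ.length = b} := by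
  ext X
  simp [cyl, restr_succ, List.append_singleton_inj]

lemma mem_openOf {X : Cantor} {V : Set Str} : X ∈ openOf V ↔ ∃ σ ∈ V, X ∈ cyl σ := by
  simp [openOf]

lemma measurableSet_cyl (σ : Str) : MeasurableSet (cyl σ) := by
  have : cyl σ = ⋂ i ∈ Finset.range σ.length, (fun X : Cantor => X i) ⁻¹' {ofStr σ i} := by
    ext X; simp [mem_cyl_iff]
  rw [this]
  exact Finset.measurableSet_biInter _ fun i _ =>
    measurable_pi_apply i (measurableSet_singleton _)

lemma measurableSet_openOf (V : Set Str) : MeasurableSet (openOf V) :=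
  .biUnion (Set.to_countable V) fun σ _ => measurableSet_cyl σ

lemma isPiSystem_range_cyl : IsPiSystem (Set.range cyl) := by
  have inter_mem : ∀ {σ τ : Str}, σ.length ≤ τ.length → (cyl σ ∩ cyl τ).Nonempty →
      cyl σ ∩ cyl τ ∈ Set.range cyl := by
    rintro σ τ hle ⟨X, hσ, hτ⟩
    refine ⟨τ, (Set.inter_eq_right.2 fun Y hY => ?_).symm⟩
    rw [mem_cyl_iff] at hσ hτ hY ⊢
    intro i hi
    rw [hY i (hi.trans_le hle), ← hτ i (hi.trans_le hle), hσ i hi]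
  rintro _ ⟨σ, rfl⟩ _ ⟨τ, rfl⟩ hne
  rcases le_total σ.length τ.length with h | h
  · exact inter_mem h hne
  · rw [Set.inter_comm] at hne ⊢
    exact inter_mem h hne

lemma generateFrom_range_cyl :
    MeasurableSpace.generateFrom (Set.range cyl) = (inferInstance : MeasurableSpace Cantor) := by
  refine le_antisymm (MeasurableSpace.generateFrom_le ?_) ?_
  · rintro _ ⟨σ, rfl⟩
    exact measurableSet_cyl σ
  rw [show (inferInstance : MeasurableSpace Cantor) = MeasurableSpace.pi from rfl,
    MeasurableSpace.pi_eq_generateFrom_projections]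
  refine MeasurableSpace.generateFrom_le ?_
  rintro _ ⟨i, A, -, rfl⟩
  have : Function.eval i ⁻¹' A =
      ⋃ σ ∈ {σ : Str | σ.length = i + 1 ∧ ofStr σ i ∈ A}, cyl σ := by
    ext X
    simp only [Set.mem_preimage, Function.eval, Set.mem_iUnion, Set.mem_ofPred_eq, exists_prop]
    constructor
    · intro hX
      exact ⟨restr X (i + 1), ⟨length_restr _ _, by rwa [ofStr_restr X i.lt_succ_self]⟩,
        mem_cyl_restr X _⟩
    · rintro ⟨σ, ⟨hlen, hA⟩, hX⟩
      rwa [mem_cyl_iff.1 hX i (by omega)]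
  rw [this]
  exact .biUnion (Set.to_countable _) fun σ _ => .basic _ ⟨σ, rfl⟩

lemma measure_ext_of_cyl {μ ν : Measure Cantor} [IsProbabilityMeasure μ]
    [IsProbabilityMeasure ν] (h : ∀ σ, μ (cyl σ) = ν (cyl σ)) : μ = ν :=
  ext_of_generate_finite _ generateFrom_range_cyl.symm isPiSystem_range_cyl
    (by rintro _ ⟨σ, rfl⟩; exact h σ) (by simp)

def odds (X : Cantor) : Cantor := fun k => X (2 * k + 1)

def oddPart (σ : Str) : Str := restr (odds (ofStr σ)) (σ.length / 2)

@[simp] lemma length_oddPart (σ : Str) : (oddPart σ).length = σ.length / 2 := by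
  simp [oddPart]

lemma oddPart_restr (X : Cantor) (n : ℕ) : oddPart (restr X n) = restr (odds X) (n / 2) := by
  rw [oddPart, length_restr, restr_eq_restr_iff]
  intro k hk
  exact ofStr_restr X (by omega)

lemma mem_openOf_preimage_oddPart {X : Cantor} {V : Set Str} (h : odds X ∈ openOf V) :
    X ∈ openOf (oddPart ⁻¹' V) := by
  obtain ⟨τ, hτ, hX : restr (odds X) τ.length = τ⟩ := mem_openOf.1 h
  refine mem_openOf.2 ⟨restr X (2 * τ.length), ?_, mem_cyl_restr X _⟩
  rwa [Set.mem_preimage, oddPart_restr, Nat.mul_div_cancel_left _ two_pos, hX]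

def evenMismatch (Z : Cantor) : Set Str :=
  {σ | σ.length % 2 = 1 ∧ ofStr σ (σ.length - 1) ≠ Z (σ.length / 2)}

def preimageInterleave (Z : Cantor) (U : Set Str) : Set Str :=
  {τ | restr (interleave Z (ofStr τ)) (2 * τ.length) ∈ U ∨
    restr (interleave Z (ofStr τ)) (2 * τ.length + 1) ∈ U}

section Interleave

variable (Z : Cantor)

@[simp] lemma interleave_two_mul (Y : Cantor) (k : ℕ) : interleave Z Y (2 * k) = Z k := by
  simp [interleave]

@[simp] lemma interleave_two_mul_add_one (Y : Cantor) (k : ℕ) :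
    interleave Z Y (2 * k + 1) = Y k := by
  have : (2 * k + 1) / 2 = k := by omega
  simp [interleave, this]

@[simp] lemma odds_interleave (Y : Cantor) : odds (interleave Z Y) = Y := by
  ext k; simp [odds]

lemma interleave_odds_of_forall {X : Cantor} (h : ∀ k, X (2 * k) = Z k) :
    interleave Z (odds X) = X := by
  ext n
  obtain ⟨k, rfl | rfl⟩ := Nat.even_or_odd' n
  · simp [h]
  · simp [odds]

lemma measurable_interleave : Measurable (interleave Z) :=
  measurable_pi_lambda _ fun n => by
    unfold interleave
    split_ifs
    exacts [measurable_const, measurable_pi_apply _]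

lemma restr_interleave_congr {Y Y' : Cantor} {n : ℕ} (h : restr Y (n / 2) = restr Y' (n / 2)) :
    restr (interleave Z Y) n = restr (interleave Z Y') n := by
  rw [restr_eq_restr_iff] at h ⊢
  intro i hi
  obtain ⟨k, rfl | rfl⟩ := Nat.even_or_odd' i
  · simp
  · simpa using h k (by omega)

lemma preimage_interleave_cyl_subset (σ : Str) : interleave Z ⁻¹' cyl σ ⊆ cyl (oddPart σ) := by
  intro Y (hY : restr (interleave Z Y) σ.length = σ)
  rw [← hY, oddPart_restr, odds_interleave]
  exact mem_cyl_restr Y _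

lemma preimage_interleave_cyl (σ : Str) :
    interleave Z ⁻¹' cyl σ = ∅ ∨ interleave Z ⁻¹' cyl σ = cyl (oddPart σ) := by
  refine (Set.eq_empty_or_nonempty _).imp_right fun ⟨Y₀, (hY₀ : restr _ σ.length = σ)⟩ =>
    (preimage_interleave_cyl_subset Z σ).antisymm fun Y hY => ?_
  rw [← hY₀, oddPart_restr, odds_interleave, mem_cyl_restr_iff] at hY
  rw [Set.mem_preimage, ← hY₀, mem_cyl_restr_iff]
  exact restr_interleave_congr Z hY

lemma preimage_interleave_openOf_preimage_oddPart_subset (V : Set Str) :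
    interleave Z ⁻¹' openOf (oddPart ⁻¹' V) ⊆ openOf V := by
  intro Y hY
  obtain ⟨σ, hσ, hY⟩ := mem_openOf.1 hY
  exact mem_openOf.2 ⟨_, hσ, preimage_interleave_cyl_subset Z σ hY⟩

lemma mem_openOf_evenMismatch {X : Cantor} :
    X ∈ openOf (evenMismatch Z) ↔ ∃ k, X (2 * k) ≠ Z k := by
  rw [mem_openOf]
  constructor
  · rintro ⟨σ, ⟨hodd, hne⟩, hX⟩
    refine ⟨σ.length / 2, ?_⟩
    rwa [show 2 * (σ.length / 2) = σ.length - 1 by omega, mem_cyl_iff.1 hX _ (by omega)]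
  · rintro ⟨k, hk⟩
    refine ⟨restr X (2 * k + 1), ⟨by simp, ?_⟩, mem_cyl_restr X _⟩
    simpa [ofStr_restr, show (2 * k + 1) / 2 = k by omega] using hk

lemma preimage_interleave_openOf_evenMismatch : interleave Z ⁻¹' openOf (evenMismatch Z) = ∅ :=
  Set.eq_empty_of_forall_notMem fun Y hY => by simp [mem_openOf_evenMismatch] at hY

lemma restr_interleave_ofStr {Y : Cantor} {τ : Str} {n : ℕ} (hY : Y ∈ cyl τ)
    (hn : n / 2 ≤ τ.length) : restr (interleave Z (ofStr τ)) n = restr (interleave Z Y) n :=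
  restr_interleave_congr Z <|
    restr_eq_restr_iff.2 fun i hi => (mem_cyl_iff.1 hY i (by omega)).symm

lemma openOf_preimageInterleave (U : Set Str) :
    openOf (preimageInterleave Z U) = interleave Z ⁻¹' openOf U := by
  ext Y
  simp only [Set.mem_preimage, mem_openOf]
  constructor
  · rintro ⟨τ, hτ | hτ, hY⟩ <;>
    exact ⟨_, hτ, by rw [restr_interleave_ofStr Z hY (by omega)]; exact mem_cyl_restr _ _⟩
  · rintro ⟨σ, hσ, hY : restr _ σ.length = σ⟩
    refine ⟨restr Y (σ.length / 2), ?_, mem_cyl_restr Y _⟩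
    have hrestr : restr (interleave Z (ofStr (restr Y (σ.length / 2)))) σ.length = σ := by
      rw [restr_interleave_ofStr Z (mem_cyl_restr Y _) (by simp), hY]
    simp only [preimageInterleave, Set.mem_ofPred_eq, length_restr]
    rcases Nat.mod_two_eq_zero_or_one σ.length with h | h
    · left
      rwa [show 2 * (σ.length / 2) = σ.length by omega, hrestr]
    · right
      rwa [show 2 * (σ.length / 2) + 1 = σ.length by omega, hrestr]

end Interleave

section Measures

variable {Z : Cantor}

lemma MuZSpec.measure_cyl_eq {μ ν : Measure Cantor} (hμ : MuZSpec Z μ) (hν : MuZSpec Z ν)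
    (σ : Str) : μ (cyl σ) = ν (cyl σ) := by
  induction σ using List.reverseRecOn with
  | nil =>
    have := hμ.1; have := hν.1
    simp [cyl, restr]
  | append_singleton σ b ih =>
    rcases Nat.even_or_odd σ.length with h | h
    · rcases Bool.eq_or_eq_not b (Z (σ.length / 2)) with rfl | rfl
      · rw [(hμ.2.2 σ h).1, (hν.2.2 σ h).1, ih]
      · rw [(hμ.2.2 σ h).2, (hν.2.2 σ h).2]
    · rw [hμ.2.1 σ h, hν.2.1 σ h, ih]

lemma muZSpec_map_interleave {lam : Measure Cantor} (hlam : UniformSpec lam) :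
    MuZSpec Z (lam.map (interleave Z)) := by
  have := hlam.1
  have hmap (s : Set Cantor) (hs : MeasurableSet s) :
      lam.map (interleave Z) s = lam (interleave Z ⁻¹' s) :=
    Measure.map_apply (measurable_interleave Z) hs
  refine ⟨Measure.isProbabilityMeasure_map (measurable_interleave Z).aemeasurable,
    fun σ hσ b => ?_, fun σ hσ => ?_⟩
  · obtain ⟨m, hm⟩ := hσ
    rw [hmap _ (measurableSet_cyl _), hmap _ (measurableSet_cyl _), cyl_append_singleton,
      Set.preimage_inter]
    have hb : interleave Z ⁻¹' {X | X σ.length = b} = {Y | Y m = b} := by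
      ext Y; simp [hm]
    rcases preimage_interleave_cyl Z σ with h | h
    · simp [h]
    · have hlen : (oddPart σ).length = m := by simp [hm]; omega
      rw [hb, h, ← hlen, ← cyl_append_singleton, hlam.2, hlam.2, List.length_append, hlen,
        List.length_singleton, pow_succ, ENNReal.div_eq_inv_mul, mul_comm]
  · obtain ⟨m, hm⟩ := hσ
    have hm2 : σ.length / 2 = m := by omega
    rw [hm2, hmap _ (measurableSet_cyl _), hmap _ (measurableSet_cyl _),
      hmap _ (measurableSet_cyl _), cyl_append_singleton, cyl_append_singleton,
      Set.preimage_inter, Set.preimage_inter]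
    have hb (b : Bool) : interleave Z ⁻¹' {X | X σ.length = b} = {_Y | Z m = b} := by
      ext Y; simp [hm, ← two_mul]
    simp [hb]

lemma MuZSpec.map_interleave_eq {μ lam : Measure Cantor} (hμ : MuZSpec Z μ)
    (hlam : UniformSpec lam) : lam.map (interleave Z) = μ :=
  have := hlam.1
  have := hμ.1
  have := Measure.isProbabilityMeasure_map (μ := lam) (measurable_interleave Z).aemeasurable
  measure_ext_of_cyl ((muZSpec_map_interleave hlam).measure_cyl_eq hμ)

end Measures

section Computability

variable {α β : Type} [Primcodable α] [Primcodable β]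

lemma CE.preimage {S : Set β} (hS : CE S) {f : α → β} (hf : Computable f) : CE (f ⁻¹' S) :=
  let ⟨g, hg, hgS⟩ := hS
  ⟨fun a => g (f a), hg.comp hf, fun a => hgS (f a)⟩

lemma CE.union {S T : Set α} (hS : CE S) (hT : CE T) : CE (S ∪ T) := by
  obtain ⟨f, hf, hfS⟩ := hS
  obtain ⟨g, hg, hgT⟩ := hT
  obtain ⟨k, hk, hkdom⟩ := Partrec.merge' hf hg
  exact ⟨k, hk, fun a => by rw [(hkdom a).2, ← hfS, ← hgT]; rfl⟩

lemma CE.of_computablePred {p : α → Prop} (hp : ComputablePred p) : CE {a | p a} :=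
  ⟨_, hp.to_re, fun a => by simp [Part.assert]⟩

lemma computable₂_ofStr : Computable₂ ofStr :=
  (Primrec.list_getD false).to_comp

lemma Computable.restr {f : α → Cantor} (hf : Computable₂ f) {n : α → ℕ} (hn : Computable n) :
    Computable fun a => restr (f a) (n a) := by
  have : Computable fun a =>
      Nat.rec (motive := fun _ => Str) [] (fun k IH => IH ++ [f a k]) (n a) :=
    Computable.nat_rec hn (Computable.const [])
      (Computable.list_concat.comp (Computable.snd.comp Computable.snd)
        (hf.comp Computable.fst (Computable.fst.comp Computable.snd))).to₂
  refine this.of_eq fun a => ?_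
  induction n a with
  | zero => rfl
  | succ k ih => rw [restr_succ, ← ih]

lemma Computable.interleave {Z : Cantor} (hZ : Computable Z) {f : α → Cantor}
    (hf : Computable₂ f) : Computable₂ fun a => interleave Z (f a) := by
  have hdiv : Computable fun p : α × ℕ => p.2 / 2 :=
    (Primrec.nat_div.comp Primrec.snd (Primrec.const 2)).to_comp
  refine (Computable.cond (c := fun p : α × ℕ => decide (p.2 % 2 = 0)) ?_ (hZ.comp hdiv)
    (hf.comp Computable.fst hdiv)).of_eq fun p => ?_
  · exact (Primrec.eq.comp (Primrec.nat_mod.comp Primrec.snd (Primrec.const 2))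
      (Primrec.const 0)).decide.to_comp
  · simp [_root_.interleave, Bool.cond_decide]

lemma computable_oddPart : Computable oddPart :=
  Computable.restr (f := fun σ => odds (ofStr σ)) (computable₂_ofStr.comp Computable.fst
      (Primrec.succ.comp (Primrec.nat_mul.comp (Primrec.const 2) Primrec.snd)).to_comp)
    (Primrec.nat_div.comp Primrec.list_length (Primrec.const 2)).to_comp

end Computability

section Randomness

variable {Z : Cantor} {μ lam : Measure Cantor}

lemma ce_evenMismatch (hZ : Computable Z) : CE (evenMismatch Z) := by
  refine CE.of_computablePred (Computable.computablePred ?_)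
  refine (Primrec.and.to_comp.comp
    (Primrec.eq.comp (Primrec.nat_mod.comp Primrec.list_length (Primrec.const 2))
      (Primrec.const 1)).decide.to_comp
    (Primrec.not.to_comp.comp (Primrec.eq.decide.to_comp.comp
      (computable₂_ofStr.comp Computable.id
        (Primrec.nat_sub.comp Primrec.list_length (Primrec.const 1)).to_comp)
      (hZ.comp (Primrec.nat_div.comp Primrec.list_length (Primrec.const 2)).to_comp)))).of_eq
    fun σ => ?_
  simp

lemma MLRandom.not_mem_openOf {X : Cantor} (hX : MLRandom μ X) {W : Set Str} (hW : CE W)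
    (hW0 : μ (openOf W) = 0) : X ∉ openOf W :=
  (hX (fun _ => W) ⟨hW.preimage Computable.snd, fun i => by simp [hW0]⟩).elim fun _ hi => hi

lemma measure_openOf_of_map_interleave (hmap : lam.map (interleave Z) = μ) (U : Set Str) :
    μ (openOf U) = lam (interleave Z ⁻¹' openOf U) := by
  rw [← hmap, Measure.map_apply (measurable_interleave Z) (measurableSet_openOf U)]

lemma interleave_odds_of_mlRandom (hZ : Computable Z) (hmap : lam.map (interleave Z) = μ)
    {X : Cantor} (hX : MLRandom μ X) : interleave Z (odds X) = X := by
  refine interleave_odds_of_forall Z fun k => ?_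
  by_contra hk
  refine hX.not_mem_openOf (ce_evenMismatch hZ) ?_ ((mem_openOf_evenMismatch Z).2 ⟨k, hk⟩)
  rw [measure_openOf_of_map_interleave hmap, preimage_interleave_openOf_evenMismatch,
    measure_empty]

lemma mlTest_preimage_oddPart (hmap : lam.map (interleave Z) = μ) {V : ℕ → Set Str}
    (hV : MLTest lam V) : MLTest μ (fun i => oddPart ⁻¹' V i) := by
  refine ⟨hV.1.preimage (Computable.pair Computable.fst (computable_oddPart.comp Computable.snd)),
    fun i => ?_⟩
  calc μ (openOf (oddPart ⁻¹' V i))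
      = lam (interleave Z ⁻¹' openOf (oddPart ⁻¹' V i)) :=
        measure_openOf_of_map_interleave hmap _
    _ ≤ lam (openOf (V i)) :=
        measure_mono (preimage_interleave_openOf_preimage_oddPart_subset Z _)
    _ ≤ 1 / 2 ^ i := hV.2 i

lemma mlRandom_odds (hmap : lam.map (interleave Z) = μ) {X : Cantor} (hX : MLRandom μ X) :
    MLRandom lam (odds X) := fun _ hV =>
  (hX _ (mlTest_preimage_oddPart hmap hV)).imp fun _ hi h => hi (mem_openOf_preimage_oddPart h)

lemma mlTest_preimageInterleave (hZ : Computable Z) (hmap : lam.map (interleave Z) = μ)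
    {U : ℕ → Set Str} (hU : MLTest μ U) : MLTest lam (fun i => preimageInterleave Z (U i)) := by
  have hZτ : Computable₂ fun (p : ℕ × Str) => interleave Z (ofStr p.2) :=
    Computable.interleave hZ (computable₂_ofStr.comp (Computable.snd.comp Computable.fst)
      Computable.snd)
  have hlen : Computable fun p : ℕ × Str => 2 * p.2.length :=
    (Primrec.nat_mul.comp (Primrec.const 2) (Primrec.list_length.comp Primrec.snd)).to_comp
  refine ⟨(hU.1.preimage (Computable.pair Computable.fst (Computable.restr hZτ hlen))).union
    (hU.1.preimage (Computable.pair Computable.fst (Computable.restr hZτ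
      (Computable.succ.comp hlen)))), fun i => ?_⟩
  rw [openOf_preimageInterleave, ← measure_openOf_of_map_interleave hmap]
  exact hU.2 i

lemma mlRandom_interleave (hZ : Computable Z) (hmap : lam.map (interleave Z) = μ) {Y : Cantor}
    (hY : MLRandom lam Y) : MLRandom μ (interleave Z Y) := fun U hU =>
  (hY _ (mlTest_preimageInterleave hZ hmap hU)).imp fun i hi h =>
    hi (by rwa [openOf_preimageInterleave])

end Randomness

/-- For computable `Z`, a real is `μ_Z`-Martin-Löf random if and only if it is of the form
`Z ⊕ Y` for `Y` Martin-Löf random with respect to the uniform measure. -/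
theorem stmt4 (Z : Cantor) (hZ : Computable Z) (μZ lam : Measure Cantor)
    (hμ : MuZSpec Z μZ) (hlam : UniformSpec lam) (X : Cantor) :
    MLRandom μZ X ↔ ∃ Y : Cantor, MLRandom lam Y ∧ X = interleave Z Y := by
  have hmap : lam.map (interleave Z) = μZ := hμ.map_interleave_eq hlam
  constructor
  · intro hX
    exact ⟨odds X, mlRandom_odds hmap hX, (interleave_odds_of_mlRandom hZ hmap hX).symm⟩
  · rintro ⟨Y, hY, rfl⟩
    exact mlRandom_interleave hZ hmap hY
end

section
/- Let (w_e)_{e∈ℕ} be nonnegative reals with Σ_e w_e = 1, let w_m = max_e w_e > 0, and let (w*_e[n]) be sequences with lim_n w*_e[n] = w_e for each e and Σ_e w*_e[n] ≤ 1 for each n. Then there exists n_0 such that for all n ≥ n_0 and all e, |w_e − w*_e[n]| < w_m/5. -/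
open Filter

/-- Uniform convergence of weight approximations: if the limit weights `w` are nonnegative
and sum to `1`, `w m` is the (positive) maximum weight, and the nonnegative approximations
`ws · n` converge pointwise to `w` with total mass at most `1`, then for all sufficiently
large `n` the approximation is within `w m / 5` of `w` simultaneously for all indices. -/
theorem stmt10 (w : ℕ → ℝ) (hnn : ∀ e, 0 ≤ w e) (hsum : HasSum w 1)
    (m : ℕ) (hmax : ∀ e, w e ≤ w m) (hpos : 0 < w m)
    (ws : ℕ → ℕ → ℝ) (hwsnn : ∀ e n, 0 ≤ ws e n)
    (hconv : ∀ e, Tendsto (fun n => ws e n) atTop (nhds (w e)))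
    (hS : ∀ n, Summable (fun e => ws e n)) (hb : ∀ n, ∑' e, ws e n ≤ 1) :
    ∃ n₀ : ℕ, ∀ n ≥ n₀, ∀ e, |w e - ws e n| < w m / 5 := by
  set δ := w m / 5 with hδ
  have hδpos : 0 < δ := by positivity
  -- choose N such that the partial sum over `range N` exceeds `1 - δ/4`
  have h1 : ∀ᶠ N in atTop, 1 - δ / 4 < ∑ i ∈ Finset.range N, w i :=
    hsum.tendsto_sum_nat.eventually (eventually_gt_nhds (by linarith))
  obtain ⟨N, hN⟩ := h1.exists
  set η := δ / (4 * ((N : ℝ) + 1)) with hη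
  have hηpos : 0 < η := by positivity
  have hev : ∀ᶠ n in atTop, ∀ e ∈ Finset.range N, |ws e n - w e| < η := by
    rw [Filter.eventually_all_finset]
    intro e _
    have := (hconv e).eventually (Metric.ball_mem_nhds (w e) hηpos)
    simpa [Real.dist_eq] using this
  obtain ⟨n₀, hn₀⟩ := eventually_atTop.mp hev
  have hNη : (N : ℝ) * η ≤ δ / 4 := by
    rw [hη, mul_div_assoc', div_le_div_iff₀ (by positivity) (by norm_num)]
    nlinarith [hδpos.le, Nat.cast_nonneg (α := ℝ) N]
  have hηle : η ≤ δ / 4 := by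
    rw [hη]
    apply div_le_div_of_nonneg_left hδpos.le (by norm_num)
    nlinarith [Nat.cast_nonneg (α := ℝ) N]
  refine ⟨n₀, fun n hn e => ?_⟩
  have hF := hn₀ n hn
  by_cases he : e ∈ Finset.range N
  · have h := hF e he
    have h' : |w e - ws e n| < η := by rw [abs_sub_comm]; exact h
    linarith [h', hηle]
  · -- tail bound for `w e`
    have hwe : w e < δ / 4 := by
      have h1 : ∑ i ∈ insert e (Finset.range N), w i ≤ 1 :=
        sum_le_hasSum _ (fun i _ => hnn i) hsum
      rw [Finset.sum_insert he] at h1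
      linarith
    -- lower bound on the approximate partial sum
    have hsumlow : 1 - δ / 2 < ∑ i ∈ Finset.range N, ws i n := by
      have key : ∀ i ∈ Finset.range N, w i - ws i n ≤ η := by
        intro i hi
        have := hF i hi
        have := abs_lt.mp this
        linarith [this.1]
      have h2 : ∑ i ∈ Finset.range N, (w i - ws i n) ≤ (N : ℝ) * η := by
        calc ∑ i ∈ Finset.range N, (w i - ws i n)
            ≤ ∑ _i ∈ Finset.range N, η := Finset.sum_le_sum key
          _ = (N : ℝ) * η := by simp [mul_comm]
      rw [Finset.sum_sub_distrib] at h2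
      linarith
    -- upper bound on `ws e n`
    have hwse : ws e n < δ / 2 := by
      have h3 : ∑ i ∈ insert e (Finset.range N), ws i n ≤ 1 := by
        calc ∑ i ∈ insert e (Finset.range N), ws i n
            ≤ ∑' i, ws i n := Summable.sum_le_tsum _ (fun i _ => hwsnn i n) (hS n)
          _ ≤ 1 := hb n
      rw [Finset.sum_insert he] at h3
      linarith
    have := hnn e
    have := hwsnn e n
    rw [abs_lt]
    constructor <;> linarith
end
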